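/- arXiv:2205.07087 — 4 statements merged into one kernel-verified Lean document; each statement's English description precedes it below -/
import Mathlib

section
/- For every p in (1,2], the function f(x,p) := 1 - x^p - p·x^(p-1) + p·x is nonnegative for all x in [0,1], and moreover f(·,p) is nonincreasing on [0,1]; consequently, for any a in (0,1), f(x,p) ≥ f(a,p) > 0 for all x in [0,a]. -/
open Real

private lemma key_ineq {p x : ℝ} (hp1 : 1 < p) (hp2 : p ≤ 2) (hx0 : 0 < x) (hx1 : x < 1) :
    x ^ (2 - p) < x + p - 1 := by
  rcases eq_or_lt_of_le hp2 with h | h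
  · subst h; simp [Real.rpow_zero]; linarith
  · have hgm := Real.geom_mean_le_arith_mean2_weighted (by linarith : (0:ℝ) ≤ 2 - p)
      (by linarith : (0:ℝ) ≤ p - 1) hx0.le zero_le_one (by ring)
    rw [Real.one_rpow, mul_one, mul_one] at hgm
    have : (2 - p) * x < x := by nlinarith
    linarith

private lemma hasDeriv (p : ℝ) {x : ℝ} (hx : x ≠ 0) :
    HasDerivAt (fun x : ℝ => 1 - x ^ p - p * x ^ (p - 1) + p * x)
      (0 - p * x ^ (p - 1) - p * ((p - 1) * x ^ (p - 1 - 1)) + p * 1) x := by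
  exact (((hasDerivAt_const x (1:ℝ)).sub (Real.hasDerivAt_rpow_const (Or.inl hx))).sub
    ((Real.hasDerivAt_rpow_const (Or.inl hx)).const_mul p)).add ((hasDerivAt_id x).const_mul p)

/-- For `p ∈ (1,2]`, the function `f(x,p) = 1 - x^p - p x^(p-1) + p x` is nonnegative on
`[0,1]`, nonincreasing on `[0,1]`, and for any `a ∈ (0,1)`, `f(x,p) ≥ f(a,p) > 0` on `[0,a]`. -/
theorem stmt_2 (p : ℝ) (hp1 : 1 < p) (hp2 : p ≤ 2) :
    (∀ x : ℝ, x ∈ Set.Icc (0 : ℝ) 1 → 0 ≤ 1 - x ^ p - p * x ^ (p - 1) + p * x) ∧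
      AntitoneOn (fun x : ℝ => 1 - x ^ p - p * x ^ (p - 1) + p * x) (Set.Icc 0 1) ∧
      ∀ a : ℝ, a ∈ Set.Ioo (0 : ℝ) 1 →
        (0 < 1 - a ^ p - p * a ^ (p - 1) + p * a) ∧
        ∀ x : ℝ, x ∈ Set.Icc (0 : ℝ) a →
          1 - a ^ p - p * a ^ (p - 1) + p * a ≤ 1 - x ^ p - p * x ^ (p - 1) + p * x := by
  set f : ℝ → ℝ := fun x => 1 - x ^ p - p * x ^ (p - 1) + p * x with hf
  have hp0 : 0 < p := by linarith
  have hcont : ContinuousOn f (Set.Icc 0 1) := by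
    apply ContinuousOn.add
    apply ContinuousOn.sub
    apply ContinuousOn.sub continuousOn_const
    · exact fun x _ => (Real.continuousAt_rpow_const x p (Or.inr hp0.le)).continuousWithinAt
    · exact continuousOn_const.mul fun x _ =>
        (Real.continuousAt_rpow_const x (p-1) (Or.inr (by linarith))).continuousWithinAt
    · exact continuousOn_const.mul continuousOn_id
  have hderiv : ∀ x ∈ Set.Ioo (0:ℝ) 1, deriv f x < 0 := by
    intro x hx
    obtain ⟨hx0, hx1⟩ := hx
    rw [(hasDeriv p hx0.ne').deriv]
    have hkey := key_ineq hp1 hp2 hx0 hx1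
    -- multiply by x^(p-2) > 0
    have hxp2 : (0:ℝ) < x ^ (p - 2) := Real.rpow_pos_of_pos hx0 _
    have h1 : x ^ (2 - p) * x ^ (p - 2) = 1 := by
      rw [← Real.rpow_add hx0]; norm_num
    have h2 : x * x ^ (p - 2) = x ^ (p - 1) := by
      nth_rewrite 1 [← Real.rpow_one x]
      rw [← Real.rpow_add hx0]
      ring_nf
    have hmul : 1 < x ^ (p - 1) + (p - 1) * x ^ (p - 2) := by
      have h3 := mul_lt_mul_of_pos_right hkey hxp2
      rw [h1] at h3
      nlinarith [h2]
    have hp12 : x ^ (p - 1 - 1) = x ^ (p - 2) := by rw [show p - 1 - 1 = p - 2 by ring]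
    rw [hp12]
    nlinarith [hmul]
  have hsa : StrictAntiOn f (Set.Icc 0 1) :=
    strictAntiOn_of_deriv_neg (convex_Icc 0 1) hcont (by rwa [interior_Icc])
  have hanti : AntitoneOn f (Set.Icc 0 1) := hsa.antitoneOn
  have hf1 : f 1 = 0 := by simp [hf]
  refine ⟨?_, hanti, ?_⟩
  · intro x hx
    have := hanti hx (by norm_num : (1:ℝ) ∈ Set.Icc (0:ℝ) 1) hx.2
    rw [hf1] at this
    exact this
  · intro a ha
    have ha' : a ∈ Set.Icc (0:ℝ) 1 := ⟨ha.1.le, ha.2.le⟩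
    constructor
    · have := hsa ha' (by norm_num : (1:ℝ) ∈ Set.Icc (0:ℝ) 1) ha.2
      rw [hf1] at this
      exact this
    · intro x hx
      exact hanti ⟨hx.1, hx.2.trans ha.2.le⟩ ha' hx.2
end

section
/- Let p ∈ (1,2] and let x ∈ [0,1). Then both expressions 1 − x^p + p·(x^{p−1} − x) and 1 − x^p − p·(x^{p−1} − x) are nonnegative, and the second one is strictly positive for x ∈ [0,1): i.e. 1 − x^p − p·x^{p−1} + p·x > 0 for all x ∈ [0,1). -/
open Real

/-- For `p ∈ (1,2]` and `x ∈ [0,1)`, both `1 - x^p + p (x^{p-1} - x)` and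
`1 - x^p - p (x^{p-1} - x)` are nonnegative, and the latter is strictly positive:
`1 - x^p - p x^{p-1} + p x > 0`. -/
theorem stmt_16 (p x : ℝ) (hp1 : 1 < p) (hp2 : p ≤ 2) (hx0 : 0 ≤ x) (hx1 : x < 1) :
    0 ≤ 1 - x ^ p + p * (x ^ (p - 1) - x) ∧
    0 ≤ 1 - x ^ p - p * (x ^ (p - 1) - x) ∧
    0 < 1 - x ^ p - p * x ^ (p - 1) + p * x := by
  have hp0 : 0 < p := lt_trans one_pos hp1
  have ha : 0 < p - 1 := by linarith
  -- key strict inequality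
  have key : 0 < 1 - x ^ p - p * x ^ (p - 1) + p * x := by
    rcases eq_or_lt_of_le hx0 with h0 | hxpos
    · rw [← h0, Real.zero_rpow (ne_of_gt hp0), Real.zero_rpow (ne_of_gt ha)]
      norm_num
    · -- Bernoulli: x^(p-1) ≤ 1 + (p-1)*(x-1)
      have hb : x ^ (p - 1) ≤ 1 + (p - 1) * (x - 1) := by
        have h := rpow_one_add_le_one_add_mul_self (s := x - 1) (by linarith)
          (p := p - 1) (le_of_lt ha) (by linarith)
        simpa using h
      have hsplit : x ^ p = x * x ^ (p - 1) := by
        have h := Real.rpow_add hxpos 1 (p - 1)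
        rw [Real.rpow_one] at h
        rw [← h]; ring_nf
      rw [hsplit]
      nlinarith [mul_nonneg (by linarith : (0:ℝ) ≤ x + p)
          (sub_nonneg.2 hb), mul_pos (sub_pos.2 hx1) (mul_pos ha (by linarith : 0 < x + (p - 1)))]
  refine ⟨?_, by linarith [key], key⟩
  -- first part: 1 - x^p ≥ 0 and x^(p-1) ≥ x
  have h1 : x ^ p ≤ 1 := Real.rpow_le_one hx0 hx1.le hp0.le
  have h2 : x ≤ x ^ (p - 1) := by
    rcases eq_or_lt_of_le hx0 with h0 | hxpos
    · rw [← h0, Real.zero_rpow (ne_of_gt ha)]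
    · have := Real.rpow_le_rpow_of_exponent_ge hxpos hx1.le (by linarith : p - 1 ≤ 1)
      simpa using this
  nlinarith [mul_nonneg hp0.le (sub_nonneg.2 h2)]
end

section
/- Let c₁ > 0, and let r̄ ∈ (0,1/2) be the unique solution of S(r̄)/(1−2r̄) = c₁, where S is the binary entropy S(r) = −r·log r −(1−r)·log(1−r). Set c₂ := max(1/c₁, (1−2r̄)²/(2·c₁·r̄)). Then for every r ∈ [0,1/2] and every α ≥ c₂·S(r)/(1−2r)², it holds that S(r) ≤ c₁·(1+α)·(1−2r)·min(1, (1+α)·(1−2r)/α). -/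
open Real

/-- Binary entropy `S(r)` with the convention `0 · log 0 = 0` (Lean's `log 0 = 0`). -/
noncomputable def coinEntropy (r : ℝ) : ℝ := -r * Real.log r - (1 - r) * Real.log (1 - r)

lemma coinEntropy_nonneg {r : ℝ} (hr0 : 0 ≤ r) (hr1 : r ≤ 1) : 0 ≤ coinEntropy r := by
  have h1 : Real.log r ≤ 0 := Real.log_nonpos hr0 hr1
  have h2 : Real.log (1 - r) ≤ 0 := Real.log_nonpos (by linarith) (by linarith)
  have := mul_nonneg hr0 (neg_nonneg.mpr h1)
  have := mul_nonneg (by linarith : (0:ℝ) ≤ 1 - r) (neg_nonneg.mpr h2)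
  unfold coinEntropy
  nlinarith

/-- Let `c₁ > 0` and let `r̄ ∈ (0,1/2)` solve `S(r̄)/(1-2r̄) = c₁`.  Set
`c₂ = max (1/c₁) ((1-2r̄)²/(2 c₁ r̄))`.  Then for every `r ∈ [0,1/2]` and every `α > 0` with
`α (1-2r)² ≥ c₂ S(r)`, one has
`S(r) ≤ c₁ (1+α)(1-2r) · min 1 ((1+α)(1-2r)/α)`. -/
theorem stmt_17 (c₁ : ℝ) (hc₁ : 0 < c₁) (rb : ℝ) (hrb0 : 0 < rb) (hrb1 : rb < 1 / 2)
    (hrb : coinEntropy rb / (1 - 2 * rb) = c₁)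
    (r α : ℝ) (hr0 : 0 ≤ r) (hr1 : r ≤ 1 / 2) (hα0 : 0 < α)
    (hα : max (1 / c₁) ((1 - 2 * rb) ^ 2 / (2 * c₁ * rb)) * coinEntropy r
        ≤ α * (1 - 2 * r) ^ 2) :
    coinEntropy r ≤ c₁ * (1 + α) * (1 - 2 * r) * min 1 ((1 + α) * (1 - 2 * r) / α) := by
  set S := coinEntropy r with hS
  set t := 1 - 2 * r with ht
  have hS0 : 0 ≤ S := coinEntropy_nonneg hr0 (by linarith)
  have ht0 : 0 ≤ t := by rw [ht]; linarith
  have ht1 : t ≤ 1 := by rw [ht]; linarith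
  have hmax : 1 / c₁ ≤ max (1 / c₁) ((1 - 2 * rb) ^ 2 / (2 * c₁ * rb)) := le_max_left _ _
  have hkey : S / c₁ ≤ α * t ^ 2 := by
    calc S / c₁ = (1 / c₁) * S := by ring
    _ ≤ max (1 / c₁) ((1 - 2 * rb) ^ 2 / (2 * c₁ * rb)) * S := by
        exact mul_le_mul_of_nonneg_right hmax hS0
    _ ≤ α * t ^ 2 := hα
  have hkey2 : S ≤ c₁ * α * t ^ 2 := by
    have := (div_le_iff₀ hc₁).mp hkey
    nlinarith
  rcases le_total 1 ((1 + α) * t / α) with h | h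
  · rw [min_eq_left h]
    have h' : α ≤ (1 + α) * t := by
      have := (le_div_iff₀ hα0).mp h
      linarith
    calc S ≤ c₁ * α * t ^ 2 := hkey2
    _ ≤ c₁ * (1 + α) * t * 1 := by
        nlinarith [mul_nonneg (mul_nonneg hc₁.le hα0.le) (mul_nonneg ht0 (sub_nonneg.mpr ht1)),
          mul_nonneg hc₁.le ht0]
  · rw [min_eq_right h]
    have hdiv : c₁ * (1 + α) * t * ((1 + α) * t / α) = c₁ * (1 + α) ^ 2 * t ^ 2 / α := by
      field_simp
    rw [hdiv, le_div_iff₀ hα0]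
    nlinarith [mul_nonneg hc₁.le (sq_nonneg t), hα0.le]
end

section
/- Let p ∈ (1,2] and for real z and ε = ±1 define D(z, ε, δ) := |z|^p − |z + 2εδ|^p for δ > 0. Then for |z| ≥ 2δ one has |D(z,ε,δ) + 2p·ε·sign(z)·|z|^{p−1}·δ| ≤ C(p)·δ^p for an explicit constant C(p) depending only on p, and the remainder term D(z,ε,δ) + 2p·ε·sign(z)·|z|^{p−1}·δ is ≤ 0 for all |z| ≥ 2δ. -/
open Real

/-- Subadditivity of `x ^ r` for `r ∈ [0,1]` on nonnegative reals. -/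
lemma my_add_rpow_le (u v r : ℝ) (hu : 0 ≤ u) (hv : 0 ≤ v) (hr0 : 0 ≤ r) (hr1 : r ≤ 1) :
    (u + v) ^ r ≤ u ^ r + v ^ r := by
  have h := NNReal.rpow_add_le_add_rpow u.toNNReal v.toNNReal hr0 hr1
  rw [← NNReal.coe_le_coe, NNReal.coe_add, NNReal.coe_rpow, NNReal.coe_rpow, NNReal.coe_rpow,
    NNReal.coe_add, Real.coe_toNNReal _ hu, Real.coe_toNNReal _ hv] at h
  exact h

/-- Hölder-type estimate: `x^r - y^r ≤ (x-y)^r` for `0 ≤ y ≤ x`, `r ∈ [0,1]`. -/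
lemma my_rpow_sub_le (x y r : ℝ) (hy : 0 ≤ y) (hxy : y ≤ x) (hr0 : 0 ≤ r) (hr1 : r ≤ 1) :
    x ^ r - y ^ r ≤ (x - y) ^ r := by
  have h := my_add_rpow_le (x - y) y r (by linarith) hy hr0 hr1
  have : x - y + y = x := by ring
  rw [this] at h
  linarith

/-- Tangent line inequality for the convex function `x ^ p`, `p ≥ 1`, from Bernoulli. -/
lemma my_tangent (p a b : ℝ) (hp : 1 ≤ p) (ha : 0 < a) (hb : 0 ≤ b) :
    a ^ p + p * a ^ (p - 1) * (b - a) ≤ b ^ p := by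
  have hs : -1 ≤ b / a - 1 := by
    have : 0 ≤ b / a := div_nonneg hb ha.le
    linarith
  have hB := one_add_mul_self_le_rpow_one_add hs hp
  have h1 : (1 : ℝ) + (b / a - 1) = b / a := by ring
  rw [h1] at hB
  have hap : (0:ℝ) < a ^ p := Real.rpow_pos_of_pos ha p
  have h2 : a ^ p * (b / a) ^ p = b ^ p := by
    rw [← Real.mul_rpow ha.le (div_nonneg hb ha.le), mul_div_cancel₀ _ ha.ne']
  have h3 : a ^ p * (1 + p * (b / a - 1)) ≤ a ^ p * (b / a) ^ p :=
    mul_le_mul_of_nonneg_left hB hap.le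
  rw [h2] at h3
  have h4 : a ^ p * (1 + p * (b / a - 1)) = a ^ p + p * a ^ (p - 1) * (b - a) := by
    have hap1 : a ^ (p - 1) * a = a ^ p := by
      rw [← Real.rpow_add_one ha.ne' (p - 1)]; ring_nf
    field_simp
    linear_combination (-(p * (b - a))) * hap1
  linarith [h3, h4.symm.le]

/-- Core estimate with `a = |z| ≥ 2δ > 0` and `η = ε · sign z ∈ {±1}`. -/
lemma my_key (p a δ η : ℝ) (hp1 : 1 < p) (hp2 : p ≤ 2) (hδ : 0 < δ)
    (hη : η = 1 ∨ η = -1) (ha : 2 * δ ≤ a) :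
    (a ^ p - (a + 2 * η * δ) ^ p) + 2 * p * η * a ^ (p - 1) * δ ≤ 0 ∧
    |(a ^ p - (a + 2 * η * δ) ^ p) + 2 * p * η * a ^ (p - 1) * δ| ≤ p * 2 ^ p * δ ^ p := by
  set b := a + 2 * η * δ with hb_def
  have ha0 : 0 < a := by linarith
  have hb0 : 0 ≤ b := by rcases hη with rfl | rfl <;> simp [hb_def] <;> linarith
  have hbpos : ∀ h : η = 1, 0 < b := by intro h; rw [hb_def, h]; linarith
  -- first part: tangent at a
  have ht1 : a ^ p + p * a ^ (p - 1) * (b - a) ≤ b ^ p := my_tangent p a b hp1.le ha0 hb0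
  have hba : b - a = 2 * η * δ := by rw [hb_def]; ring
  have part1 : (a ^ p - b ^ p) + 2 * p * η * a ^ (p - 1) * δ ≤ 0 := by
    have : p * a ^ (p - 1) * (b - a) = 2 * p * η * a ^ (p - 1) * δ := by rw [hba]; ring
    linarith [ht1, this.symm.le]
  refine ⟨part1, ?_⟩
  rw [abs_of_nonpos part1]
  -- second part: tangent at b gives the upper bound for -R
  have hr0 : (0:ℝ) ≤ p - 1 := by linarith
  have hr1 : p - 1 ≤ 1 := by linarith
  have key2 : b ^ p - a ^ p - p * a ^ (p - 1) * (b - a) ≤ p * 2 ^ p * δ ^ p := by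
    rcases hη with rfl | rfl
    · -- b = a + 2δ > a
      have hb' : b = a + 2 * δ := by rw [hb_def]; ring
      have hbpos' : 0 < b := by rw [hb']; linarith
      have ht2 : b ^ p + p * b ^ (p - 1) * (a - b) ≤ a ^ p := my_tangent p b a hp1.le hbpos' ha0.le
      have hdiff : b ^ (p - 1) - a ^ (p - 1) ≤ (2 * δ) ^ (p - 1) := by
        have := my_rpow_sub_le b a (p - 1) ha0.le (by rw [hb']; linarith) hr0 hr1
        have hba' : b - a = 2 * δ := by rw [hb']; ring
        rwa [hba'] at this
      have h2d : (2 * δ) ^ p = 2 ^ p * δ ^ p := Real.mul_rpow (by norm_num) hδ.le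
      have h2d' : (2 * δ) ^ (p - 1) * (2 * δ) = 2 ^ p * δ ^ p := by
        rw [← Real.rpow_add_one (by positivity : (2 * δ : ℝ) ≠ 0) (p - 1)]
        simpa using h2d
      have ht2' : b ^ p + p * b ^ (p - 1) * (-(2 * δ)) ≤ a ^ p := by
        rw [show (-(2*δ) : ℝ) = a - b by rw [hb']; ring]; exact ht2
      have hmul : p * (2 * δ) * (b ^ (p - 1) - a ^ (p - 1)) ≤ p * (2 * δ) * (2 * δ) ^ (p - 1) :=
        mul_le_mul_of_nonneg_left hdiff (by positivity)
      have heq : p * (2 * δ) * (2 * δ) ^ (p - 1) = p * 2 ^ p * δ ^ p := by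
        rw [mul_assoc, mul_comm (2 * δ) _, h2d']; ring
      have hba'' : b - a = 2 * δ := by rw [hb']; ring
      rw [hba'']
      nlinarith [ht2', hmul, heq]
    · -- b = a - 2δ ≥ 0
      have hb' : b = a - 2 * δ := by rw [hb_def]; ring
      have hbnn : 0 ≤ b := by rw [hb']; linarith
      have hdiff : a ^ (p - 1) - b ^ (p - 1) ≤ (2 * δ) ^ (p - 1) := by
        have := my_rpow_sub_le a b (p - 1) hbnn (by rw [hb']; linarith) hr0 hr1
        have hab' : a - b = 2 * δ := by rw [hb']; ring
        rwa [hab'] at this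
      have h2d : (2 * δ) ^ p = 2 ^ p * δ ^ p := Real.mul_rpow (by norm_num) hδ.le
      have h2d' : (2 * δ) ^ (p - 1) * (2 * δ) = 2 ^ p * δ ^ p := by
        rw [← Real.rpow_add_one (by positivity : (2 * δ : ℝ) ≠ 0) (p - 1)]
        simpa using h2d
      have hp0 : (0:ℝ) < p := by linarith
      rcases eq_or_lt_of_le hbnn with hbz | hbpos'
      · -- b = 0 : a = 2δ, bound directly
        have ha2 : a = 2 * δ := by rw [hb'] at hbz; linarith
        have hbp : b ^ p = 0 := by rw [← hbz, Real.zero_rpow (by linarith)]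
        have hap' : a ^ (p - 1) * a = a ^ p := by
          rw [← Real.rpow_add_one ha0.ne' (p - 1)]; ring_nf
        have hba2 : b - a = -(2 * δ) := by rw [hb']; ring
        rw [hbp, hba2]
        have hap2 : a ^ p = 2 ^ p * δ ^ p := by rw [ha2]; exact h2d
        have : p * a ^ (p - 1) * (2 * δ) = p * a ^ p := by rw [ha2] at hap' ⊢; nlinarith [hap']
        nlinarith [Real.rpow_nonneg ha0.le p, hap2]
      · have ht2 : b ^ p + p * b ^ (p - 1) * (a - b) ≤ a ^ p := my_tangent p b a hp1.le hbpos' ha0.le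
        have ht2' : b ^ p + p * b ^ (p - 1) * (2 * δ) ≤ a ^ p := by
          rw [show (2*δ : ℝ) = a - b by rw [hb']; ring]; exact ht2
        have hmul : p * (2 * δ) * (a ^ (p - 1) - b ^ (p - 1)) ≤ p * (2 * δ) * (2 * δ) ^ (p - 1) :=
          mul_le_mul_of_nonneg_left hdiff (by positivity)
        have heq : p * (2 * δ) * (2 * δ) ^ (p - 1) = p * 2 ^ p * δ ^ p := by
          rw [mul_assoc, mul_comm (2 * δ) _, h2d']; ring
        have hba'' : b - a = -(2 * δ) := by rw [hb']; ring
        rw [hba'']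
        nlinarith [ht2', hmul, heq]
  have : -((a ^ p - b ^ p) + 2 * p * η * a ^ (p - 1) * δ)
      = b ^ p - a ^ p - p * a ^ (p - 1) * (b - a) := by rw [hba]; ring
  linarith [key2, this.le]

/-- One-flip Taylor estimate: for `p ∈ (1,2]` there is a constant `C(p) > 0` such that for
every `δ > 0`, `ε = ±1` and real `z` with `|z| ≥ 2δ`, writing
`D := |z|^p - |z + 2εδ|^p`, the remainder `R := D + 2p ε sign(z) |z|^{p-1} δ` satisfies
`R ≤ 0` and `|R| ≤ C(p) δ^p`. -/
theorem stmt_18 (p : ℝ) (hp1 : 1 < p) (hp2 : p ≤ 2) :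
    ∃ C : ℝ, 0 < C ∧ ∀ δ : ℝ, 0 < δ → ∀ ε : ℝ, ε = 1 ∨ ε = -1 → ∀ z : ℝ, 2 * δ ≤ |z| →
      (|z| ^ p - |z + 2 * ε * δ| ^ p) + 2 * p * ε * Real.sign z * |z| ^ (p - 1) * δ ≤ 0 ∧
      |(|z| ^ p - |z + 2 * ε * δ| ^ p) + 2 * p * ε * Real.sign z * |z| ^ (p - 1) * δ|
        ≤ C * δ ^ p := by
  refine ⟨p * 2 ^ p, by positivity, ?_⟩
  intro δ hδ ε hε z hz
  have hz0 : z ≠ 0 := by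
    intro h; rw [h, abs_zero] at hz; linarith
  set η : ℝ := ε * Real.sign z with hη_def
  have hη : η = 1 ∨ η = -1 := by
    rcases hz0.lt_or_gt with h | h
    · rw [Real.sign_of_neg h] at hη_def
      rcases hε with rfl | rfl <;> [right; left] <;> rw [hη_def] <;> ring
    · rw [Real.sign_of_pos h] at hη_def
      rcases hε with rfl | rfl <;> [left; right] <;> rw [hη_def] <;> ring
  have habs : |z + 2 * ε * δ| = |z| + 2 * η * δ := by
    rcases hz0.lt_or_gt with h | h
    · have hsz : Real.sign z = -1 := Real.sign_of_neg h
      have hzabs : |z| = -z := abs_of_neg h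
      have : z + 2 * ε * δ ≤ 0 := by
        rw [hzabs] at hz
        rcases hε with rfl | rfl <;> linarith
      rw [abs_of_nonpos this, hη_def, hsz, hzabs]; ring
    · have hsz : Real.sign z = 1 := Real.sign_of_pos h
      have hzabs : |z| = z := abs_of_pos h
      have : 0 ≤ z + 2 * ε * δ := by
        rw [hzabs] at hz
        rcases hε with rfl | rfl <;> linarith
      rw [abs_of_nonneg this, hη_def, hsz, hzabs]; ring
  have hεη : 2 * p * ε * Real.sign z * |z| ^ (p - 1) * δ = 2 * p * η * |z| ^ (p - 1) * δ := by
    rw [hη_def]; ring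
  rw [habs, hεη]
  exact my_key p |z| δ η hp1 hp2 hδ hη hz
end
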